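/- Assume α = 1. Let f, g̃ : (0,1) → (0,∞) be any functions with lim_{ε→0} f(ε) = 0 and lim_{ε→0} g̃(ε) = +∞, and set a(ε) = f(ε)·ε^{−1/(1+γ⋆)} and b̃(ε) = g̃(ε)·ε^{−1/(1+γ⋆)}. Then the first passage time of the Wang–Landau process from state 1 to state 2 satisfies lim_{ε→0} P( a(ε) < T⁰₁→₂ < b̃(ε) ) = 1. -/

import Mathlib

open MeasureTheory ProbabilityTheory Filter Real Set Topology

noncomputable section

/-- The state space: index `0` is state "1", index `1` is state "2", index `2` is state "3". -/
abbrev WLState := Fin 3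

/-- First passage time of the trajectory `ω` to the state `s`
(with the convention `sInf ∅ = 0`). -/
def hitTime (s : WLState) (ω : ℕ → WLState) : ℕ := sInf {n : ℕ | ω n = s}

/-- A measure `μ` on trajectory space is the law of the (possibly path-dependent) Markov chain
with initial state `x0` and transition matrix `P x k` at time `k` given the past path `x`,
expressed through its cylinder probabilities. -/
def IsChainLaw (P : (ℕ → WLState) → ℕ → WLState → WLState → ℝ) (x0 : WLState)
    (μ : Measure (ℕ → WLState)) : Prop :=
  ∀ (n : ℕ) (x : ℕ → WLState),
    μ {ω : ℕ → WLState | ∀ k ≤ n, ω k = x k} =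
      (if x 0 = x0 then (1 : ENNReal) else 0) *
        ∏ k ∈ Finset.range n, ENNReal.ofReal (P x k (x k) (x (k + 1)))

/-- The unnormalized Wang-Landau weight `θ̃ₙ(i)` along the path `x`, with step sizes
`γₖ = γs k^(-α)`: it satisfies `θ̃₀ = (1,1,1)` and `θ̃ₙ₊₁(i) = θ̃ₙ(i)(1 + γₙ₊₁ 1_{xₙ₊₁ = i})`. -/
def wtilde (γs α : ℝ) (x : ℕ → WLState) (n : ℕ) (i : WLState) : ℝ :=
  ∏ k ∈ Finset.Icc 1 n, (1 + if x k = i then γs * (k : ℝ) ^ (-α) else 0)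

/-- The normalized Wang-Landau weight `θₙ(i)` along the path `x`. -/
def thetaNorm (γs α : ℝ) (x : ℕ → WLState) (n : ℕ) (i : WLState) : ℝ :=
  wtilde γs α x n i / ∑ j, wtilde γs α x n j

/-- The Metropolis transition matrix `P_θ` biased by the weight vector `θ`. -/
def PWL (ε : ℝ) (θ : WLState → ℝ) : WLState → WLState → ℝ :=
  ![![1 - 1 / 3 * min (ε * θ 0 / θ 1) 1, 1 / 3 * min (ε * θ 0 / θ 1) 1, 0],
    ![1 / 3 * min (θ 1 / (ε * θ 0)) 1,
      1 - 1 / 3 * min (θ 1 / (ε * θ 0)) 1 - 1 / 3 * min (θ 1 / (ε * θ 2)) 1,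
      1 / 3 * min (θ 1 / (ε * θ 2)) 1],
    ![0, 1 / 3 * min (ε * θ 2 / θ 1) 1, 1 - 1 / 3 * min (ε * θ 2 / θ 1) 1]]

/-- `μ` is the law of the Wang-Landau process with parameters `ε`, `γs`, `α`,
started at state "1" (index 0). -/
def IsWLLaw (ε γs α : ℝ) (μ : Measure (ℕ → WLState)) : Prop :=
  IsChainLaw (fun x k => PWL ε (thetaNorm γs α x k)) 0 μ

/-!
While the chain sits at state 1 the weights of states 2 and 3 stay equal to 1 and the weight of
state 1 is `W_k = ∏_{j ≤ k} (1 + γ⋆/j)`, which is of order `k^γ⋆`. So the chain leaves state 1 at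
step `k` with probability `min (ε W_k) 1 / 3 ≈ ε k^γ⋆`, and it can only leave towards state 2. Hence
`P(T⁰₁→₂ > n) = ∏_{k<n} (1 - min (ε W_k) 1 / 3)`, which is at least `1 - C ε n^{1+γ⋆}` and at most
`exp (-c min (ε n^{1+γ⋆}) n)`. On the scale `n ≍ ε^{-1/(1+γ⋆)}` the quantity `ε n^{1+γ⋆}` tends to
`0` below `a(ε)` and to `∞` above `b̃(ε)`.
-/

/-- The weight `θ̃ₖ(1)` (for `α = 1`) along the path that stays at state 1. -/
def stayWeight (γ : ℝ) (k : ℕ) : ℝ := ∏ j ∈ Finset.Icc 1 k, (1 + γ / j)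

section StayWeight

variable {γ : ℝ}

lemma one_le_stayWeight (hγ : 0 ≤ γ) (k : ℕ) : 1 ≤ stayWeight γ k :=
  Finset.one_le_prod fun _ _ => le_add_of_nonneg_right (by positivity)

lemma stayWeight_mono (hγ : 0 ≤ γ) : Monotone (stayWeight γ) := fun _ _ hkl =>
  Finset.prod_le_prod_of_subset_of_one_le (Finset.Icc_subset_Icc_right hkl)
    (fun _ _ => by positivity) fun _ _ _ => le_add_of_nonneg_right (by positivity)

lemma stayWeight_le (hγ : 0 ≤ γ) (k : ℕ) : stayWeight γ k ≤ exp γ * ((k : ℝ) + 1) ^ γ := by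
  have hlog : (harmonic k : ℝ) ≤ 1 + log ((k : ℝ) + 1) := by
    refine (harmonic_le_one_add_log k).trans ?_
    rcases k.eq_zero_or_pos with rfl | hk
    · simp
    · gcongr
      linarith
  calc stayWeight γ k ≤ ∏ j ∈ Finset.Icc 1 k, exp (γ * (j : ℝ)⁻¹) :=
        Finset.prod_le_prod (fun _ _ => by positivity) fun j _ => by
          rw [← div_eq_mul_inv, add_comm]; exact add_one_le_exp _
    _ = exp (γ * harmonic k) := by
        rw [← exp_sum, ← Finset.mul_sum, harmonic_eq_sum_Icc]; push_cast; rfl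
    _ ≤ exp (γ * (1 + log ((k : ℝ) + 1))) := by gcongr
    _ = exp γ * ((k : ℝ) + 1) ^ γ := by
        rw [rpow_def_of_pos (by positivity), ← exp_add]; ring_nf

lemma rpow_le_one_add_div (hγ : 0 ≤ γ) {x : ℝ} (hx : 0 < x) :
    ((x + 1 + γ) / (x + γ)) ^ γ ≤ 1 + γ / x := by
  have hlog : γ * log ((x + 1 + γ) / (x + γ)) ≤ log (1 + γ / x) := calc
    γ * log ((x + 1 + γ) / (x + γ)) ≤ γ * ((x + 1 + γ) / (x + γ) - 1) := by
        gcongr; exact log_le_sub_one_of_pos (by positivity)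
    _ = 1 - (1 + γ / x)⁻¹ := by field_simp; ring
    _ ≤ log (1 + γ / x) := one_sub_inv_le_log_of_pos (by positivity)
  rw [rpow_def_of_pos (by positivity), mul_comm]
  exact (exp_le_exp.2 hlog).trans_eq (exp_log (by positivity))

lemma rpow_le_stayWeight (hγ : 0 ≤ γ) (k : ℕ) :
    (((k : ℝ) + 1 + γ) / (1 + γ)) ^ γ ≤ stayWeight γ k := by
  induction k with
  | zero => simp [stayWeight, div_self (by positivity : (1 + γ) ≠ 0)]
  | succ k ih =>
    rw [stayWeight, Finset.prod_Icc_succ_top (by omega), ← stayWeight]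
    calc (((↑(k + 1) : ℝ) + 1 + γ) / (1 + γ)) ^ γ
        = (((k : ℝ) + 1 + γ) / (1 + γ)) ^ γ * (((k + 1 : ℝ) + 1 + γ) / ((k + 1 : ℝ) + γ)) ^ γ := by
          rw [← mul_rpow (by positivity) (by positivity)]
          congr 1
          field_simp
          push_cast
          ring
      _ ≤ stayWeight γ k * (1 + γ / ↑(k + 1)) := by
          push_cast
          exact mul_le_mul ih (rpow_le_one_add_div hγ (by positivity)) (by positivity)
            (zero_le_one.trans (one_le_stayWeight hγ k))

end StayWeight

lemma one_sub_sum_le_prod_one_sub {ι : Type*} (s : Finset ι) {t : ι → ℝ} (ht0 : ∀ i ∈ s, 0 ≤ t i)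
    (ht1 : ∀ i ∈ s, t i ≤ 1) : 1 - ∑ i ∈ s, t i ≤ ∏ i ∈ s, (1 - t i) := by
  classical
  induction s using Finset.induction_on with
  | empty => simp
  | insert i s hi ih =>
    rw [Finset.sum_insert hi, Finset.prod_insert hi]
    have hs := ih (fun j hj => ht0 j (by simp [hj])) (fun j hj => ht1 j (by simp [hj]))
    have hsum : 0 ≤ ∑ j ∈ s, t j := Finset.sum_nonneg fun j hj => ht0 j (by simp [hj])
    have hti0 := ht0 i (by simp)
    have hti1 := ht1 i (by simp)
    nlinarith

/-- The probability `P_{θₖ}(1, 1)` of staying at state 1 along that path. -/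
def stayProb (ε γ : ℝ) (k : ℕ) : ℝ := 1 - 1 / 3 * min (ε * stayWeight γ k) 1

section StayProb

variable {ε γ : ℝ}

lemma min_mul_stayWeight_nonneg (hε : 0 ≤ ε) (hγ : 0 ≤ γ) (k : ℕ) :
    0 ≤ min (ε * stayWeight γ k) 1 :=
  le_min (mul_nonneg hε (zero_le_one.trans (one_le_stayWeight hγ k))) zero_le_one

lemma stayProb_nonneg (k : ℕ) : 0 ≤ stayProb ε γ k := by
  have := min_le_right (ε * stayWeight γ k) 1
  unfold stayProb
  linarith

lemma stayProb_le_one (hε : 0 ≤ ε) (hγ : 0 ≤ γ) (k : ℕ) : stayProb ε γ k ≤ 1 := by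
  have := min_mul_stayWeight_nonneg hε hγ k
  unfold stayProb
  linarith

lemma stayProb_antitone (hε : 0 ≤ ε) (hγ : 0 ≤ γ) : Antitone (stayProb ε γ) := fun _ _ hkl => by
  unfold stayProb
  gcongr
  exact stayWeight_mono hγ hkl

lemma one_sub_le_prod_stayProb (hε : 0 ≤ ε) (hγ : 0 ≤ γ) (n : ℕ) :
    1 - exp γ / 3 * (ε * (n : ℝ) ^ (1 + γ)) ≤ ∏ k ∈ Finset.range n, stayProb ε γ k := by
  have hterm : ∀ k ∈ Finset.range n,
      1 / 3 * min (ε * stayWeight γ k) 1 ≤ ε * (exp γ * n ^ γ) / 3 := by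
    intro k hk
    have hkn : (k : ℝ) + 1 ≤ n := by exact_mod_cast Finset.mem_range.1 hk
    calc 1 / 3 * min (ε * stayWeight γ k) 1 ≤ 1 / 3 * (ε * stayWeight γ k) := by
          gcongr; exact min_le_left _ _
      _ ≤ 1 / 3 * (ε * (exp γ * ((k : ℝ) + 1) ^ γ)) := by gcongr; exact stayWeight_le hγ k
      _ ≤ ε * (exp γ * n ^ γ) / 3 := by
          rw [one_div_mul_eq_div]; gcongr
  calc 1 - exp γ / 3 * (ε * (n : ℝ) ^ (1 + γ))
        = 1 - ∑ _k ∈ Finset.range n, ε * (exp γ * n ^ γ) / 3 := by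
        rw [Finset.sum_const, Finset.card_range, nsmul_eq_mul,
          rpow_one_add' n.cast_nonneg (by positivity)]
        ring
    _ ≤ 1 - ∑ k ∈ Finset.range n, 1 / 3 * min (ε * stayWeight γ k) 1 := by
        gcongr with k hk; exact hterm k hk
    _ ≤ ∏ k ∈ Finset.range n, stayProb ε γ k :=
        one_sub_sum_le_prod_one_sub _
          (fun k _ => by linarith [min_mul_stayWeight_nonneg hε hγ k])
          (fun k _ => by linarith [min_le_right (ε * stayWeight γ k) 1])

lemma prod_stayProb_le_exp (hε : 0 ≤ ε) (hγ : 0 ≤ γ) (j m : ℕ) :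
    ∏ k ∈ Finset.range m, stayProb ε γ k ≤ exp (-((m - j : ℕ) * min (ε * stayWeight γ j) 1 / 3)) :=
  calc ∏ k ∈ Finset.range m, stayProb ε γ k ≤ ∏ k ∈ Finset.Ico j m, stayProb ε γ k :=
        Finset.prod_le_prod_of_subset_of_le_one (fun k hk => by simp_all [Finset.mem_Ico])
          (fun k _ => stayProb_nonneg k) fun k _ _ => stayProb_le_one hε hγ k
    _ ≤ ∏ _k ∈ Finset.Ico j m, stayProb ε γ j :=
        Finset.prod_le_prod (fun k _ => stayProb_nonneg k) fun k hk =>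
          stayProb_antitone hε hγ (Finset.mem_Ico.1 hk).1
    _ ≤ exp (-(1 / 3 * min (ε * stayWeight γ j) 1)) ^ (m - j) := by
        rw [Finset.prod_const, Nat.card_Ico]
        gcongr
        · exact stayProb_nonneg j
        · exact one_sub_le_exp_neg _
    _ = exp (-((m - j : ℕ) * min (ε * stayWeight γ j) 1 / 3)) := by
        rw [← exp_nat_mul]; ring_nf

end StayProb

lemma prod_stayProb_le_exp_min {ε γ : ℝ} (hε : 0 ≤ ε) (hγ : 0 ≤ γ) (m : ℕ) :
    ∏ k ∈ Finset.range m, stayProb ε γ k ≤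
      exp (-(min (ε * (m : ℝ) ^ (1 + γ) / (2 ^ (1 + γ) * (1 + γ) ^ γ)) ((m : ℝ) / 2) / 3)) := by
  set X : ℝ := (m : ℝ) / 2 with hXdef
  have hX0 : 0 ≤ X := by positivity
  have hX : X ≤ (m - m / 2 : ℕ) := by
    rw [Nat.cast_sub (Nat.div_le_self m 2), hXdef]
    have : ((m / 2 : ℕ) : ℝ) ≤ X := Nat.cast_div_le
    linarith
  have hXj : X ≤ (m / 2 : ℕ) + 1 + γ := by
    rw [hXdef]
    have : (m : ℝ) ≤ 2 * (m / 2 : ℕ) + 1 := by exact_mod_cast (by omega : m ≤ 2 * (m / 2) + 1)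
    linarith
  have hW : ε * (X / (1 + γ)) ^ γ ≤ ε * stayWeight γ (m / 2) := by
    gcongr
    refine le_trans ?_ (rpow_le_stayWeight hγ (m / 2))
    gcongr
  have hmin : min (ε * (m : ℝ) ^ (1 + γ) / (2 ^ (1 + γ) * (1 + γ) ^ γ)) X =
      X * min (ε * (X / (1 + γ)) ^ γ) 1 := by
    rw [mul_min_of_nonneg _ _ hX0, mul_one, div_rpow hX0 (by positivity),
      show X * (ε * (X ^ γ / (1 + γ) ^ γ)) = ε * (X * X ^ γ) / (1 + γ) ^ γ by ring,
      ← rpow_one_add' hX0 (by positivity), hXdef, div_rpow (by positivity) (by positivity)]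
    congr 1
    ring
  calc ∏ k ∈ Finset.range m, stayProb ε γ k
      ≤ exp (-((m - m / 2 : ℕ) * min (ε * stayWeight γ (m / 2)) 1 / 3)) :=
        prod_stayProb_le_exp hε hγ (m / 2) m
    _ ≤ _ := by
        rw [hmin]
        gcongr

section Asymptotics

variable {ι : Type*} {l : Filter ι} {γ : ℝ} {ε : ι → ℝ}

lemma tendsto_prod_stayProb_nhds_one (hγ : 0 ≤ γ) (hε : ∀ᶠ i in l, 0 ≤ ε i) {n : ι → ℕ}
    (hn : Tendsto (fun i => ε i * (n i : ℝ) ^ (1 + γ)) l (𝓝 0)) :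
    Tendsto (fun i => ∏ k ∈ Finset.range (n i), stayProb (ε i) γ k) l (𝓝 1) := by
  have hlow : Tendsto (fun i => 1 - exp γ / 3 * (ε i * (n i : ℝ) ^ (1 + γ))) l (𝓝 1) := by
    simpa using tendsto_const_nhds.sub (hn.const_mul (exp γ / 3))
  refine tendsto_of_tendsto_of_tendsto_of_le_of_le' hlow tendsto_const_nhds ?_ ?_
  · filter_upwards [hε] with i hi using one_sub_le_prod_stayProb hi hγ (n i)
  · filter_upwards [hε] with i hi using
      Finset.prod_le_one (fun k _ => stayProb_nonneg k) fun k _ => stayProb_le_one hi hγ k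

lemma tendsto_prod_stayProb_nhds_zero (hγ : 0 ≤ γ) (hε : ∀ᶠ i in l, 0 ≤ ε i) {m : ι → ℕ}
    (hm : Tendsto (fun i => (m i : ℝ)) l atTop)
    (hεm : Tendsto (fun i => ε i * (m i : ℝ) ^ (1 + γ)) l atTop) :
    Tendsto (fun i => ∏ k ∈ Finset.range (m i), stayProb (ε i) γ k) l (𝓝 0) := by
  have hmin : Tendsto (fun i => min (ε i * (m i : ℝ) ^ (1 + γ) / (2 ^ (1 + γ) * (1 + γ) ^ γ))
      ((m i : ℝ) / 2) / 3) l atTop :=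
    (tendsto_inf_atTop _ (hεm.atTop_div_const (by positivity))
      (hm.atTop_div_const two_pos)).atTop_div_const three_pos
  refine tendsto_of_tendsto_of_tendsto_of_le_of_le' tendsto_const_nhds
    (tendsto_exp_atBot.comp (tendsto_neg_atTop_atBot.comp hmin)) ?_ ?_
  · exact Eventually.of_forall fun i => Finset.prod_nonneg fun k _ => stayProb_nonneg k
  · filter_upwards [hε] with i hi using prod_stayProb_le_exp_min hi hγ (m i)

end Asymptotics

lemma PWL_thetaNorm_const_zero {γ : ℝ} (hγ : 0 ≤ γ) (ε : ℝ) (k : ℕ) :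
    PWL ε (thetaNorm γ 1 (fun _ => 0) k) 0 0 = stayProb ε γ k := by
  have hw : ∀ i, wtilde γ 1 (fun _ => 0) k i = if i = 0 then stayWeight γ k else 1 := by
    intro i
    fin_cases i <;> simp [wtilde, stayWeight, rpow_neg_one, div_eq_mul_inv]
  have hθ : ε * thetaNorm γ 1 (fun _ => 0) k 0 / thetaNorm γ 1 (fun _ => 0) k 1 =
      ε * stayWeight γ k := by
    have hW := one_le_stayWeight hγ k
    simp only [thetaNorm, hw, ↓reduceIte, Fin.sum_univ_three, one_ne_zero, Fin.reduceEq, one_div,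
      div_inv_eq_mul]
    field_simp
  simp only [PWL, Matrix.cons_val_zero, hθ, stayProb]

/-- A path that avoids state 2 but leaves state 1 has to jump from 1 to 3. -/
lemma IsChainLaw.measure_forall_ne_one_le {P : (ℕ → WLState) → ℕ → WLState → WLState → ℝ}
    {μ : Measure (ℕ → WLState)} (hμ : IsChainLaw P 0 μ) (hP : ∀ x k, P x k 0 2 = 0) (m : ℕ) :
    μ {ω | ∀ k ≤ m, ω k ≠ 1} ≤ μ {ω | ∀ k ≤ m, ω k = 0} := by
  have hWL : ∀ s : WLState, s ≠ 1 → s ≠ 0 → s = 2 := by decide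
  refine measure_mono_ae (ae_le_set.2 ?_)
  induction m with
  | zero =>
    refine measure_mono_null (t := {ω | ∀ k ≤ 0, ω k = (fun _ => 2) k}) ?_ ?_
    · rintro ω ⟨havoid, hstay⟩
      simp_all
    · rw [hμ]
      simp
  | succ m ih =>
    set x : ℕ → WLState := Function.update (fun _ => 0) (m + 1) 2
    refine measure_mono_null (t := ({ω | ∀ k ≤ m, ω k ≠ 1} \ {ω | ∀ k ≤ m, ω k = 0}) ∪
      {ω | ∀ k ≤ m + 1, ω k = x k}) ?_ (measure_union_null ih ?_)
    · rintro ω ⟨havoid, hstay⟩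
      by_cases h : ∀ k ≤ m, ω k = 0
      · right
        intro k hk
        rcases Nat.lt_or_eq_of_le hk with hk | rfl
        · simp [x, show k ≠ m + 1 by omega, h k (by omega)]
        · have h0 : ω (m + 1) ≠ 0 := fun h0 => hstay fun j hj => by
            rcases Nat.lt_or_eq_of_le hj with hj | rfl
            exacts [h j (by omega), h0]
          simpa [x] using hWL _ (havoid _ le_rfl) h0
      · left
        exact ⟨fun k hk => havoid k (by omega), h⟩
    · rw [hμ, Finset.prod_eq_zero (i := m) (by simp) (by simp [x, hP])]
      simp

lemma lt_hitTime_of_forall_ne {s : WLState} {ω : ℕ → WLState} {n k : ℕ} (hn : ∀ j ≤ n, ω j ≠ s)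
    (hk : ω k = s) : n < hitTime s ω := by
  by_contra! h
  exact hn _ h (Nat.sInf_mem (s := {j | ω j = s}) ⟨k, hk⟩)

lemma IsWLLaw.measureReal_forall_eq_zero {ε γ : ℝ} (hγ : 0 ≤ γ) {μ : Measure (ℕ → WLState)}
    (hμ : IsWLLaw ε γ 1 μ) (n : ℕ) :
    μ.real {ω | ∀ k ≤ n, ω k = 0} = ∏ k ∈ Finset.range n, stayProb ε γ k := by
  rw [measureReal_def, hμ n, if_pos rfl, one_mul, ENNReal.toReal_prod]
  exact Finset.prod_congr rfl fun k _ => by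
    dsimp only
    rw [PWL_thetaNorm_const_zero hγ, ENNReal.toReal_ofReal (stayProb_nonneg k)]

lemma IsWLLaw.prod_stayProb_sub_le_measureReal {ε γ : ℝ} (hγ : 0 ≤ γ)
    {μ : Measure (ℕ → WLState)} [IsFiniteMeasure μ] (hμ : IsWLLaw ε γ 1 μ) {a b : ℝ} {n m : ℕ}
    (ha : a ≤ n) (hb : (m : ℝ) < b) :
    ∏ k ∈ Finset.range n, stayProb ε γ k - ∏ k ∈ Finset.range m, stayProb ε γ k ≤
      μ.real {ω | a < hitTime 1 ω ∧ (hitTime 1 ω : ℝ) < b} := by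
  have hincl : {ω : ℕ → WLState | ∀ k ≤ n, ω k = 0} \ {ω | ∀ k ≤ m, ω k ≠ 1} ⊆
      {ω | a < hitTime 1 ω ∧ (hitTime 1 ω : ℝ) < b} := by
    rintro ω ⟨hstay, havoid⟩
    obtain ⟨k, hkm, hk⟩ : ∃ k ≤ m, ω k = 1 := by simpa using havoid
    have hnT : n < hitTime 1 ω :=
      lt_hitTime_of_forall_ne (fun j hj => by simp [hstay j hj]) hk
    have hTk : hitTime 1 ω ≤ k := Nat.sInf_le hk
    constructor
    · exact ha.trans_lt (by exact_mod_cast hnT)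
    · exact lt_of_le_of_lt (by exact_mod_cast hTk.trans hkm) hb
  calc _ ≤ μ.real {ω | ∀ k ≤ n, ω k = 0} - μ.real {ω | ∀ k ≤ m, ω k ≠ 1} := by
        rw [← hμ.measureReal_forall_eq_zero hγ, ← hμ.measureReal_forall_eq_zero hγ]
        exact sub_le_sub_left (ENNReal.toReal_mono (measure_ne_top _ _)
          (hμ.measure_forall_ne_one_le (fun _ _ => rfl) m)) _
    _ ≤ μ.real ({ω | ∀ k ≤ n, ω k = 0} \ {ω | ∀ k ≤ m, ω k ≠ 1}) := le_measureReal_sdiff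
    _ ≤ _ := measureReal_mono hincl

section Scaling

variable {γ : ℝ}

lemma mul_mul_rpow_neg_rpow {ε x : ℝ} (hγ : 0 < 1 + γ) (hε : 0 < ε) (hx : 0 ≤ x) :
    ε * (x * ε ^ (-(1 / (1 + γ)))) ^ (1 + γ) = x ^ (1 + γ) := by
  rw [mul_rpow hx (by positivity), ← rpow_mul hε.le,
    show -(1 / (1 + γ)) * (1 + γ) = -1 by field_simp, rpow_neg_one]
  field_simp

lemma rpow_mul_rpow_neg {ε : ℝ} (hε : 0 < ε) :
    ε ^ (1 / (1 + γ)) * ε ^ (-(1 / (1 + γ))) = 1 := by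
  rw [← rpow_add hε, add_neg_cancel, rpow_zero]

variable {l : Filter ℝ}

lemma tendsto_mul_natCeil_rpow_nhds_zero (hγ : 0 < 1 + γ) (hl : ∀ᶠ ε in l, 0 < ε)
    (hδ : Tendsto (fun ε => ε ^ (1 / (1 + γ))) l (𝓝 0)) {x : ℝ → ℝ} (hx0 : ∀ᶠ ε in l, 0 ≤ x ε)
    (hx : Tendsto x l (𝓝 0)) :
    Tendsto (fun ε => ε * (⌈x ε * ε ^ (-(1 / (1 + γ)))⌉₊ : ℝ) ^ (1 + γ)) l (𝓝 0) := by
  have hlim : Tendsto (fun ε => (x ε + ε ^ (1 / (1 + γ))) ^ (1 + γ)) l (𝓝 0) := by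
    simpa [zero_rpow hγ.ne'] using (hx.add hδ).rpow_const (Or.inr hγ.le)
  refine tendsto_of_tendsto_of_tendsto_of_le_of_le' tendsto_const_nhds hlim ?_ ?_
  · filter_upwards [hl] with ε hε using by positivity
  · filter_upwards [hl, hx0] with ε hε hxε
    rw [← mul_mul_rpow_neg_rpow (x := x ε + ε ^ (1 / (1 + γ))) hγ hε (by positivity)]
    gcongr
    calc (⌈x ε * ε ^ (-(1 / (1 + γ)))⌉₊ : ℝ) ≤ x ε * ε ^ (-(1 / (1 + γ))) + 1 :=
          (Nat.ceil_lt_add_one (by positivity)).le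
      _ = _ := by rw [add_mul, rpow_mul_rpow_neg hε]

lemma tendsto_mul_natCeil_sub_one_rpow_atTop (hγ : 0 < 1 + γ) (hl : ∀ᶠ ε in l, 0 < ε)
    (hδ : Tendsto (fun ε => ε ^ (1 / (1 + γ))) l (𝓝 0)) {y : ℝ → ℝ} (hy : Tendsto y l atTop) :
    Tendsto (fun ε => ε * (⌈y ε * ε ^ (-(1 / (1 + γ))) - 1⌉₊ : ℝ) ^ (1 + γ)) l atTop := by
  have hsub : Tendsto (fun ε => y ε - ε ^ (1 / (1 + γ))) l atTop := by
    simpa [sub_eq_add_neg] using hy.atTop_add hδ.neg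
  refine tendsto_atTop_mono' l ?_ ((tendsto_rpow_atTop hγ).comp hsub)
  filter_upwards [hl, hsub.eventually_ge_atTop 0] with ε hε hyε
  rw [Function.comp_apply, ← mul_mul_rpow_neg_rpow hγ hε hyε]
  gcongr
  calc (y ε - ε ^ (1 / (1 + γ))) * ε ^ (-(1 / (1 + γ)))
      = y ε * ε ^ (-(1 / (1 + γ))) - 1 := by rw [sub_mul, rpow_mul_rpow_neg hε]
    _ ≤ _ := Nat.le_ceil _

lemma tendsto_natCeil_mul_rpow_sub_one_atTop (hγ : 0 < 1 + γ) (hl : ∀ᶠ ε in l, ε ∈ Set.Ioc 0 1)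
    {y : ℝ → ℝ} (hy : Tendsto y l atTop) :
    Tendsto (fun ε => (⌈y ε * ε ^ (-(1 / (1 + γ))) - 1⌉₊ : ℝ)) l atTop := by
  refine tendsto_atTop_mono' _ ?_ (tendsto_atTop_add_const_right _ (-1) hy)
  filter_upwards [hl, hy.eventually_ge_atTop 0] with ε hε hyε
  have hE : 1 ≤ ε ^ (-(1 / (1 + γ))) :=
    one_le_rpow_of_pos_of_le_one_of_nonpos hε.1 hε.2 (neg_nonpos.2 (by positivity))
  calc y ε + -1 ≤ y ε * ε ^ (-(1 / (1 + γ))) - 1 := by nlinarith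
    _ ≤ _ := Nat.le_ceil _

end Scaling

theorem stmt9_general (γs : ℝ) (hγs : 0 < γs)
    (μ : ℝ → Measure (ℕ → WLState))
    (hprob : ∀ ε ∈ Set.Ioo (0 : ℝ) 1, IsProbabilityMeasure (μ ε))
    (hμ : ∀ ε ∈ Set.Ioo (0 : ℝ) 1, IsWLLaw ε γs 1 (μ ε))
    (f gt : ℝ → ℝ)
    (hfpos : ∀ ε ∈ Set.Ioo (0 : ℝ) 1, 0 < f ε)
    (hf : Tendsto f (𝓝[Set.Ioo (0 : ℝ) 1] 0) (𝓝 0))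
    (hgt : Tendsto gt (𝓝[Set.Ioo (0 : ℝ) 1] 0) atTop) :
    Tendsto
      (fun ε : ℝ =>
        (μ ε {ω : ℕ → WLState |
          f ε * ε ^ (-(1 / (1 + γs))) < (hitTime 1 ω : ℝ) ∧
            (hitTime 1 ω : ℝ) < gt ε * ε ^ (-(1 / (1 + γs)))}).toReal)
      (𝓝[Set.Ioo (0 : ℝ) 1] 0) (𝓝 1) := by
  have hγ : 0 < 1 + γs := by linarith
  have hmem : ∀ᶠ ε in 𝓝[Set.Ioo (0 : ℝ) 1] 0, ε ∈ Set.Ioo (0 : ℝ) 1 := self_mem_nhdsWithin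
  have hpos : ∀ᶠ ε in 𝓝[Set.Ioo (0 : ℝ) 1] 0, 0 < ε := hmem.mono fun _ h => h.1
  have hδ : Tendsto (fun ε : ℝ => ε ^ (1 / (1 + γs))) (𝓝[Set.Ioo (0 : ℝ) 1] 0) (𝓝 0) :=
    (tendsto_id.mono_left nhdsWithin_le_nhds).rpow_const_nhds_zero (by positivity)
  have hlim := (tendsto_prod_stayProb_nhds_one hγs.le (hpos.mono fun _ h => h.le)
    (tendsto_mul_natCeil_rpow_nhds_zero hγ hpos hδ (hmem.mono fun ε h => (hfpos ε h).le) hf)).sub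
    (tendsto_prod_stayProb_nhds_zero hγs.le (hpos.mono fun _ h => h.le)
      (tendsto_natCeil_mul_rpow_sub_one_atTop hγ (hmem.mono fun _ h => Ioo_subset_Ioc_self h) hgt)
      (tendsto_mul_natCeil_sub_one_rpow_atTop hγ hpos hδ hgt))
  rw [sub_zero] at hlim
  refine tendsto_of_tendsto_of_tendsto_of_le_of_le' hlim tendsto_const_nhds ?_ ?_
  · filter_upwards [hmem, hgt.eventually_ge_atTop 1] with ε hε hg
    have := hprob ε hε
    have hE : 1 ≤ ε ^ (-(1 / (1 + γs))) :=
      one_le_rpow_of_pos_of_le_one_of_nonpos hε.1 hε.2.le (neg_nonpos.2 (by positivity))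
    refine (hμ ε hε).prod_stayProb_sub_le_measureReal hγs.le (Nat.le_ceil _) ?_
    linarith [Nat.ceil_lt_add_one (show 0 ≤ gt ε * ε ^ (-(1 / (1 + γs))) - 1 by nlinarith)]
  · filter_upwards [hmem] with ε hε
    have := hprob ε hε
    exact measureReal_le_one

/-- For `α = 1`, with `a(ε) = f(ε)·ε^{−1/(1+γ⋆)}` and
`b̃(ε) = g̃(ε)·ε^{−1/(1+γ⋆)}` where `f → 0` and `g̃ → ∞`, the first passage time to
state 2 satisfies `lim_{ε→0} P(a(ε) < T⁰₁→₂ < b̃(ε)) = 1`. -/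
theorem stmt9 (γs : ℝ) (hγs : 0 < γs)
    (μ : ℝ → Measure (ℕ → WLState))
    (hprob : ∀ ε ∈ Set.Ioo (0 : ℝ) 1, IsProbabilityMeasure (μ ε))
    (hμ : ∀ ε ∈ Set.Ioo (0 : ℝ) 1, IsWLLaw ε γs 1 (μ ε))
    (f gt : ℝ → ℝ)
    (hfpos : ∀ ε ∈ Set.Ioo (0 : ℝ) 1, 0 < f ε) (hgtpos : ∀ ε ∈ Set.Ioo (0 : ℝ) 1, 0 < gt ε)
    (hf : Tendsto f (𝓝[Set.Ioo (0 : ℝ) 1] 0) (𝓝 0))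
    (hgt : Tendsto gt (𝓝[Set.Ioo (0 : ℝ) 1] 0) atTop) :
    Tendsto
      (fun ε : ℝ =>
        (μ ε {ω : ℕ → WLState |
          f ε * ε ^ (-(1 / (1 + γs))) < (hitTime 1 ω : ℝ) ∧
            (hitTime 1 ω : ℝ) < gt ε * ε ^ (-(1 / (1 + γs)))}).toReal)
      (𝓝[Set.Ioo (0 : ℝ) 1] 0) (𝓝 1) :=
  stmt9_general γs hγs μ hprob hμ f gt hfpos hf hgt
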